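/- arXiv:1410.1224 — 5 statements merged into one kernel-verified Lean document; each statement's English description precedes it below -/
import Mathlib

section
/- If T is a complete first-order theory in a countable language such that the isolated types are dense in T (i.e., every formula consistent with T is implied modulo T by a formula that isolates a complete type), then T has a countable atomic model. -/
open FirstOrder FirstOrder.Language

/-- A formula (in `n` free variables) is consistent with the theory `T` if it is realized by
some tuple in some model of `T`. -/
def ConsistentWith {L : FirstOrder.Language.{0,0}} (T : L.Theory) {n : ℕ} (φ : L.Formula (Fin n)) : Prop :=
  ∃ (M : Theory.ModelType.{0,0,0} T) (v : Fin n → M), φ.Realize v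

/-- `φ` isolates a complete type in `T`: `T ∪ {∃x̄ φ}` is consistent, and for every formula `ψ`
in the same variables, either `T ⊢ φ → ψ` or `T ⊢ φ → ¬ψ` (semantically). -/
def Isolates {L : FirstOrder.Language.{0,0}} (T : L.Theory) {n : ℕ} (φ : L.Formula (Fin n)) : Prop :=
  ConsistentWith T φ ∧
    ∀ ψ : L.Formula (Fin n),
      (∀ (M : Theory.ModelType.{0,0,0} T) (v : Fin n → M), φ.Realize v → ψ.Realize v) ∨
      (∀ (M : Theory.ModelType.{0,0,0} T) (v : Fin n → M), φ.Realize v → ¬ ψ.Realize v)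

/-- The isolated types are dense in `T`: every formula consistent with `T` is implied, modulo
`T`, by a formula isolating a complete type. -/
def IsolatedTypesDense {L : FirstOrder.Language.{0,0}} (T : L.Theory) : Prop :=
  ∀ (n : ℕ) (φ : L.Formula (Fin n)), ConsistentWith T φ →
    ∃ θ : L.Formula (Fin n), Isolates T θ ∧
      ∀ (M : Theory.ModelType.{0,0,0} T) (v : Fin n → M), θ.Realize v → φ.Realize v

/-- `M` is an atomic model of `T`: `M ⊨ T` and the type of every finite tuple from `M`
is isolated in `T`. -/
def IsAtomicModel {L : FirstOrder.Language.{0,0}} (T : L.Theory) (M : Type*) [L.Structure M] : Prop :=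
  M ⊨ T ∧ ∀ (n : ℕ) (a : Fin n → M), ∃ φ : L.Formula (Fin n), φ.Realize a ∧ Isolates T φ

/-! Fix a model `N` of `T` whose empty tuple has an isolated type (density applied to `⊤`).
Density lets every tuple of `N` with isolated type be extended, inside `N`, to a tuple with
isolated type that also witnesses any prescribed existential formula. Interleaving all
Tarski–Vaught requirements yields a sequence `a` in `N` whose initial segments have isolated
types and whose range is an elementary substructure; it is countable, and every tuple from it is
a subtuple of an initial segment, so its type is isolated too. -/

def HasIsolatedType {L : FirstOrder.Language.{0,0}} (T : L.Theory) {M : Type*} [L.Structure M]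
    {n : ℕ} (v : Fin n → M) : Prop :=
  ∃ φ : L.Formula (Fin n), φ.Realize v ∧ Isolates T φ

theorem exists_nat_seq_frequently_eq (α : Type*) [Countable α] [Nonempty α] :
    ∃ τ : ℕ → α, ∀ t, ∃ᶠ k in Filter.atTop, τ k = t := by
  obtain ⟨e, he⟩ := exists_surjective_nat α
  refine ⟨fun k => e k.unpair.2, fun t => Filter.frequently_atTop.2 fun k₀ => ?_⟩
  obtain ⟨i, rfl⟩ := he t
  exact ⟨Nat.pair k₀ i, Nat.left_le_pair _ _, by simp⟩

namespace FirstOrder.Language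

variable {L : FirstOrder.Language.{0,0}} {M : Type*} [L.Structure M]

namespace Formula

variable {k n : ℕ}

noncomputable def image (χ : L.Formula (Fin k)) (g : Fin n → Fin k) : L.Formula (Fin n) :=
  (χ.relabel Sum.inr ⊓ Formula.iInf fun j =>
    Term.equal (Term.var (Sum.inl j)) (Term.var (Sum.inr (g j)))).iExs (Fin k)

@[simp]
theorem realize_image {χ : L.Formula (Fin k)} {g : Fin n → Fin k} {u : Fin n → M} :
    (χ.image g).Realize u ↔ ∃ w, χ.Realize w ∧ w ∘ g = u := by
  simp [image, funext_iff, eq_comm]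

theorem realize_image_castSucc {θ : L.Formula (Fin (k + 1))} {u : Fin k → M} :
    (θ.image Fin.castSucc).Realize u ↔ ∃ b, θ.Realize (Fin.snoc u b) := by
  rw [realize_image]
  constructor
  · rintro ⟨w, hw, rfl⟩
    refine ⟨w (Fin.last k), ?_⟩
    rwa [show w ∘ Fin.castSucc = Fin.init w from rfl, Fin.snoc_init_self]
  · rintro ⟨b, hb⟩
    exact ⟨_, hb, Fin.snoc_comp_castSucc⟩

end Formula

noncomputable def BoundedFormula.relabelSnoc {n m : ℕ} (φ : L.BoundedFormula Empty (n + 1))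
    (g : Fin n → Fin m) : L.Formula (Fin (m + 1)) :=
  φ.toFormula.relabel (Sum.elim Empty.elim (Fin.snoc (Fin.castSucc ∘ g) (Fin.last m)))

@[simp]
theorem BoundedFormula.realize_relabelSnoc {n m : ℕ} {φ : L.BoundedFormula Empty (n + 1)}
    {g : Fin n → Fin m} {v : Fin m → M} {b : M} :
    (φ.relabelSnoc g).Realize (Fin.snoc v b) ↔ φ.Realize default (Fin.snoc (v ∘ g) b) := by
  rw [relabelSnoc, Formula.realize_relabel, realize_toFormula]
  refine iff_of_eq (congrArg₂ _ (Subsingleton.elim _ _) ?_)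
  funext i
  induction i using Fin.lastCases <;> simp

variable (L) in
def IsTarskiVaught (s : Set M) : Prop :=
  ∀ (n : ℕ) (φ : L.BoundedFormula Empty (n + 1)) (x : Fin n → M), (∀ i, x i ∈ s) →
    (∃ c, φ.Realize default (Fin.snoc x c)) → ∃ b ∈ s, φ.Realize default (Fin.snoc x b)

namespace IsTarskiVaught

variable {s : Set M}

theorem funMap_mem (hs : L.IsTarskiVaught s) {n : ℕ} (f : L.Functions n)
    {x : Fin n → M} (hx : ∀ i, x i ∈ s) : Structure.funMap f x ∈ s := by
  let φ : L.BoundedFormula Empty (n + 1) :=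
    Term.bdEqual (Term.var (Sum.inr (Fin.last n)))
      (Term.func f fun i => Term.var (Sum.inr i.castSucc))
  obtain ⟨b, hb, hφb⟩ := hs n φ x hx ⟨Structure.funMap f x, by simp [φ]⟩
  simp only [φ, BoundedFormula.realize_bdEqual, Term.realize_var, Sum.elim_inr, Fin.snoc_last,
    Term.realize_func, Fin.snoc_castSucc] at hφb
  rwa [← hφb]

noncomputable def toElementarySubstructure (hs : L.IsTarskiVaught s) :
    L.ElementarySubstructure M :=
  Substructure.toElementarySubstructure ⟨s, fun f _ hx => hs.funMap_mem f hx⟩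
    fun n φ x c hc => by
      obtain ⟨b, hb, hφb⟩ := hs n φ (Subtype.val ∘ x) (fun i => (x i).2) ⟨c, hc⟩
      exact ⟨⟨b, hb⟩, hφb⟩

end IsTarskiVaught

end FirstOrder.Language

section IsolatedTypes

variable {L : FirstOrder.Language.{0,0}} {T : L.Theory}

theorem Isolates.image {k n : ℕ} {χ : L.Formula (Fin k)}
    (hχ : Isolates T χ) (g : Fin n → Fin k) : Isolates T (χ.image g) := by
  refine ⟨?_, fun ψ => ?_⟩
  · obtain ⟨M, w, hw⟩ := hχ.1
    exact ⟨M, w ∘ g, Formula.realize_image.2 ⟨w, hw, rfl⟩⟩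
  · refine (hχ.2 (ψ.relabel g)).imp ?_ ?_ <;>
    · rintro h M _ hu
      obtain ⟨w, hw, rfl⟩ := Formula.realize_image.1 hu
      simpa using h M w hw

theorem HasIsolatedType.comp {M : Type*} [L.Structure M] {k n : ℕ} {w : Fin k → M}
    (hw : HasIsolatedType T w) (g : Fin n → Fin k) : HasIsolatedType T (w ∘ g) :=
  let ⟨χ, hχw, hχ⟩ := hw
  ⟨χ.image g, Formula.realize_image.2 ⟨w, hχw, rfl⟩, hχ.image g⟩

theorem hasIsolatedType_comp_iff {M N : Type*} [L.Structure M] [L.Structure N]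
    (f : M ↪ₑ[L] N) {n : ℕ} {v : Fin n → M} :
    HasIsolatedType T (f ∘ v) ↔ HasIsolatedType T v := by
  simp only [HasIsolatedType, f.map_formula]

/-- Isolate `χ(x) ∧ ψ(x, y)` by some `θ`; the isolating formula `χ` of `v` decides
`∃ y, θ(x, y)`, and positively, since `θ` is consistent with `T`. -/
theorem HasIsolatedType.exists_snoc (hdense : IsolatedTypesDense T)
    {N : Theory.ModelType.{0,0,0} T} {m : ℕ} {v : Fin m → N} (hv : HasIsolatedType T v)
    (ψ : L.Formula (Fin (m + 1))) (hψ : ∃ c, ψ.Realize (Fin.snoc v c)) :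
    ∃ b, HasIsolatedType T (Fin.snoc v b) ∧ ψ.Realize (Fin.snoc v b) := by
  obtain ⟨χ, hχv, hχ⟩ := hv
  obtain ⟨c, hc⟩ := hψ
  have hρ : ConsistentWith T (χ.relabel Fin.castSucc ⊓ ψ) :=
    ⟨N, Fin.snoc v c, by simpa [Fin.snoc_comp_castSucc] using ⟨hχv, hc⟩⟩
  obtain ⟨θ, hθ, hθρ⟩ := hdense _ _ hρ
  have hθv : (θ.image Fin.castSucc).Realize v := by
    refine (hχ.2 _).resolve_right (fun hneg => ?_) N v hχv
    obtain ⟨M, w, hw⟩ := hθ.1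
    have hχw : χ.Realize (w ∘ Fin.castSucc) :=
      Formula.realize_relabel.1 (Formula.realize_inf.1 (hθρ M w hw)).1
    exact hneg M _ hχw (Formula.realize_image.2 ⟨w, hw, rfl⟩)
  obtain ⟨b, hb⟩ := Formula.realize_image_castSucc.1 hθv
  exact ⟨b, ⟨θ, hb, hθ⟩, (Formula.realize_inf.1 (hθρ N _ hb)).2⟩

theorem exists_seq_hasIsolatedType (hdense : IsolatedTypesDense T)
    {N : Theory.ModelType.{0,0,0} T} (h₀ : HasIsolatedType T (default : Fin 0 → N))
    (ψ : ∀ k, L.Formula (Fin (k + 1))) :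
    ∃ a : ℕ → N, (∀ k, HasIsolatedType T fun i : Fin k => a i) ∧
      ∀ k, (∃ c, (ψ k).Realize (Fin.snoc (fun i : Fin k => a i) c)) →
        (ψ k).Realize (Fin.snoc (fun i : Fin k => a i) (a k)) := by
  have step (k : ℕ) (v : {v : Fin k → N // HasIsolatedType T v}) : ∃ b,
      HasIsolatedType T (Fin.snoc v.1 b) ∧
        ((∃ c, (ψ k).Realize (Fin.snoc v.1 c)) → (ψ k).Realize (Fin.snoc v.1 b)) := by
    by_cases hψ : ∃ c, (ψ k).Realize (Fin.snoc v.1 c)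
    · obtain ⟨b, hb, hψb⟩ := v.2.exists_snoc hdense (ψ k) hψ
      exact ⟨b, hb, fun _ => hψb⟩
    · obtain ⟨b, hb, -⟩ := v.2.exists_snoc hdense ⊤ ⟨Classical.arbitrary N, by simp⟩
      exact ⟨b, hb, fun h => absurd h hψ⟩
  choose next hnext using step
  let u (k : ℕ) : {v : Fin k → N // HasIsolatedType T v} :=
    Nat.rec ⟨default, h₀⟩ (fun k v => ⟨Fin.snoc v.1 (next k v), (hnext k v).1⟩) k
  let a (k : ℕ) : N := next k (u k)
  have hu (k : ℕ) : (u k).1 = fun i : Fin k => a i := by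
    induction k with
    | zero => exact Subsingleton.elim _ _
    | succ k ih =>
      change (Fin.snoc (u k).1 (a k) : Fin (k + 1) → N) = _
      rw [ih]
      funext i
      induction i using Fin.lastCases <;> simp
  refine ⟨a, fun k => hu k ▸ (u k).2, fun k => ?_⟩
  simpa only [hu] using (hnext k (u k)).2

theorem hasIsolatedType_of_forall_mem_range {M : Type*} [L.Structure M] {a : ℕ → M}
    (ha : ∀ k, HasIsolatedType T fun i : Fin k => a i) {n : ℕ} {x : Fin n → M}
    (hx : ∀ i, x i ∈ Set.range a) : HasIsolatedType T x := by
  choose g hg using hx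
  obtain rfl : a ∘ g = x := funext hg
  exact (ha _).comp fun i => ⟨g i, Nat.lt_succ_of_le (Finset.le_sup (Finset.mem_univ i))⟩

/-- Every task `(φ, g)` is scheduled at infinitely many stages `k`, so at some stage all its
parameters `a (g i)` are already chosen and `a k` is picked as a witness for
`∃ y, φ(a ∘ g, y)`. -/
theorem exists_seq_isTarskiVaught [Countable L.Symbols] (hdense : IsolatedTypesDense T)
    {N : Theory.ModelType.{0,0,0} T} (h₀ : HasIsolatedType T (default : Fin 0 → N)) :
    ∃ a : ℕ → N, (∀ k, HasIsolatedType T fun i : Fin k => a i) ∧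
      L.IsTarskiVaught (Set.range a) := by
  have : ∀ n, Countable (L.BoundedFormula Empty n) := fun n => sigma_mk_injective.countable
  let Task := Σ n, L.BoundedFormula Empty (n + 1) × (Fin n → ℕ)
  have : Nonempty Task := ⟨⟨0, ⊤, Fin.elim0⟩⟩
  obtain ⟨τ, hτ⟩ := exists_nat_seq_frequently_eq Task
  let task (t : Task) (k : ℕ) : L.Formula (Fin (k + 1)) :=
    if h : ∀ i, t.2.2 i < k then t.2.1.relabelSnoc fun i => ⟨t.2.2 i, h i⟩ else ⊤
  obtain ⟨a, ha, haτ⟩ := exists_seq_hasIsolatedType hdense h₀ fun k => task (τ k) k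
  refine ⟨a, ha, fun n φ x hx hφ => ?_⟩
  choose g hg using hx
  obtain rfl : a ∘ g = x := funext hg
  obtain ⟨k, hk, hτk⟩ := (hτ ⟨n, φ, g⟩).forall_exists_of_atTop (Finset.univ.sup g + 1)
  have hlt (i : Fin n) : g i < k :=
    (Nat.lt_succ_of_le (Finset.le_sup (Finset.mem_univ i))).trans_le hk
  have htask : task (τ k) k = φ.relabelSnoc fun i => ⟨g i, hlt i⟩ := by
    rw [hτk]
    exact dif_pos hlt
  have key := haτ k
  simp only [htask, BoundedFormula.realize_relabelSnoc] at key
  exact ⟨a k, ⟨k, rfl⟩, key hφ⟩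

end IsolatedTypes

/-- a complete theory in a countable language in which the isolated types are
dense has a countable atomic model. -/
theorem statement0 {L : FirstOrder.Language.{0,0}} [Countable L.Symbols] (T : L.Theory)
    (hT : T.IsComplete) (hdense : IsolatedTypesDense T) :
    ∃ (M : Type) (_ : L.Structure M), Countable M ∧ Nonempty M ∧ IsAtomicModel T M := by
  obtain ⟨M₀⟩ := hT.1
  obtain ⟨θ₀, hθ₀, -⟩ := hdense 0 ⊤ ⟨M₀, default, by simp⟩
  obtain ⟨N, v₀, hv₀⟩ := hθ₀.1
  obtain ⟨a, ha, hs⟩ := exists_seq_isTarskiVaught hdense (N := N)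
    ⟨θ₀, Subsingleton.elim v₀ default ▸ hv₀, hθ₀⟩
  let S := hs.toElementarySubstructure
  refine ⟨S, inferInstance, (Set.countable_range a).to_subtype, ⟨⟨a 0, 0, rfl⟩⟩,
    (S.theory_model_iff T).2 N.is_model, fun n x => ?_⟩
  exact (hasIsolatedType_comp_iff S.subtype).1
    (hasIsolatedType_of_forall_mem_range ha fun i => (x i).2)
end

section
/- Any two countable atomic models of a complete countable first-order theory are isomorphic. -/
open FirstOrder FirstOrder.Language

/-! Back and forth. Enumerate `M ⊕ N` and build tuples `a` in `M` and `b` in `N` of the same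
complete type, adding at each stage the next enumerated element on its side. Completeness of `T`
gives the start, the empty tuples. To extend `(a, b)` by `m ∈ M`, take a formula `φ(x̄, y)`
isolating the type of `a m`: as `b` has the type of `a`, `N ⊨ ∃ y, φ(b, y)`, and any witness `y`
realizes the isolated type. In the limit, `a ↦ b` is an elementary bijection from `M` onto `N`. -/

open Function

section BackAndForth

variable {M N : Type*} {R : ∀ n, (Fin n → M) → (Fin n → N) → Prop}

noncomputable def backAndForthStage (h0 : R 0 ![] ![])
    (extend : ∀ n a b, R n a b → ∀ z : M ⊕ N,
      ∃ p : M × N, R (n + 1) (Fin.snoc a p.1) (Fin.snoc b p.2) ∧ (z = .inl p.1 ∨ z = .inr p.2))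
    (e : ℕ → M ⊕ N) : ∀ n, {p : (Fin n → M) × (Fin n → N) // R n p.1 p.2}
  | 0 => ⟨(![], ![]), h0⟩
  | n + 1 =>
    let s := backAndForthStage h0 extend e n
    have hp := extend n _ _ s.2 (e n)
    ⟨(Fin.snoc s.1.1 hp.choose.1, Fin.snoc s.1.2 hp.choose.2), hp.choose_spec.1⟩

theorem exists_surjective_of_backAndForth [Countable M] [Countable N] [Nonempty M] [Nonempty N]
    (h0 : R 0 ![] ![])
    (forth : ∀ n a b, R n a b → ∀ m, ∃ y, R (n + 1) (Fin.snoc a m) (Fin.snoc b y))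
    (back : ∀ n a b, R n a b → ∀ y, ∃ m, R (n + 1) (Fin.snoc a m) (Fin.snoc b y)) :
    ∃ (A : ℕ → M) (B : ℕ → N), Surjective A ∧ Surjective B ∧
      ∀ n, R n (fun i => A i) (fun i => B i) := by
  have extend : ∀ n a b, R n a b → ∀ z : M ⊕ N,
      ∃ p : M × N, R (n + 1) (Fin.snoc a p.1) (Fin.snoc b p.2) ∧ (z = .inl p.1 ∨ z = .inr p.2) := by
    rintro n a b h (m | y)
    · obtain ⟨y, hy⟩ := forth n a b h m
      exact ⟨(m, y), hy, .inl rfl⟩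
    · obtain ⟨m, hm⟩ := back n a b h y
      exact ⟨(m, y), hm, .inr rfl⟩
  obtain ⟨e, he⟩ := exists_surjective_nat (M ⊕ N)
  let S := backAndForthStage h0 extend e
  let A (i : ℕ) : M := (S (i + 1)).1.1 (Fin.last i)
  let B (i : ℕ) : N := (S (i + 1)).1.2 (Fin.last i)
  have hS (n : ℕ) (i : Fin n) : (S n).1.1 i = A i ∧ (S n).1.2 i = B i := by
    induction n with
    | zero => exact i.elim0
    | succ n ih =>
      induction i using Fin.lastCases with
      | last => exact ⟨rfl, rfl⟩
      | cast j => simpa [S, backAndForthStage] using ih j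
  have he_mem (n : ℕ) : e n = .inl (A n) ∨ e n = .inr (B n) := by
    simpa [A, B, S, backAndForthStage] using (extend n _ _ (S n).2 (e n)).choose_spec.2
  refine ⟨A, B, fun m => ?_, fun y => ?_, fun n => ?_⟩
  · obtain ⟨k, hk⟩ := he (.inl m)
    exact ⟨k, by simpa [hk, eq_comm] using he_mem k⟩
  · obtain ⟨k, hk⟩ := he (.inr y)
    exact ⟨k, by simpa [hk, eq_comm] using he_mem k⟩
  · convert (S n).2 using 1 <;> funext i
    exacts [(hS n i).1.symm, (hS n i).2.symm]

end BackAndForth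

namespace FirstOrder.Language

variable {L : Language} {M N : Type*} [L.Structure M] [L.Structure N]

variable (L) in
def SameType {α : Type*} (a : α → M) (b : α → N) : Prop :=
  ∀ φ : L.Formula α, φ.Realize a ↔ φ.Realize b

namespace SameType

variable {α β : Type*} {a : α → M} {b : α → N}

theorem symm (h : L.SameType a b) : L.SameType b a := fun φ => (h φ).symm

theorem comp (h : L.SameType a b) (g : β → α) : L.SameType (a ∘ g) (b ∘ g) := fun φ => by
  simpa only [Formula.realize_relabel] using h (φ.relabel g)

theorem eq_iff_eq (h : L.SameType a b) (i j : α) : a i = a j ↔ b i = b j := by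
  simpa only [Formula.realize_equal, Term.realize_var] using h ((Term.var i).equal (Term.var j))

end SameType

theorem Theory.IsComplete.realize_iff_models_relabel {T : L.Theory} (hT : T.IsComplete)
    [M ⊨ T] [Nonempty M] {α : Type*} [IsEmpty α] (φ : L.Formula α) (v : α → M) :
    φ.Realize v ↔ T ⊨ᵇ (φ.relabel isEmptyElim : L.Sentence) := by
  rw [← hT.realize_sentence_iff _ M, Sentence.Realize, Formula.realize_relabel,
    Subsingleton.elim (default ∘ isEmptyElim) v]

theorem sameType_of_isEmpty {T : L.Theory} (hT : T.IsComplete) [M ⊨ T] [N ⊨ T] [Nonempty M]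
    [Nonempty N] {α : Type*} [IsEmpty α] (a : α → M) (b : α → N) : L.SameType a b := fun φ => by
  rw [hT.realize_iff_models_relabel, hT.realize_iff_models_relabel]

noncomputable def Formula.exLast {n : ℕ} (φ : L.Formula (Fin (n + 1))) : L.Formula (Fin n) :=
  (φ.relabel finSumFinEquiv.symm).iExs (Fin 1)

theorem Formula.realize_exLast {n : ℕ} {φ : L.Formula (Fin (n + 1))} {v : Fin n → M} :
    φ.exLast.Realize v ↔ ∃ x, φ.Realize (Fin.snoc v x) := by
  have elim_comp (x : Fin 1 → M) : Sum.elim v x ∘ finSumFinEquiv.symm = Fin.snoc v (x 0) := by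
    funext j
    refine Fin.lastCases ?_ (fun j => ?_) j <;> simp
  simp only [exLast, Formula.realize_iExs, Formula.realize_relabel, elim_comp]
  exact ⟨fun ⟨x, hx⟩ => ⟨x 0, hx⟩, fun ⟨x, hx⟩ => ⟨fun _ => x, hx⟩⟩

theorem sameType_comp_of_forall_sameType_prefix {A : ℕ → M} {B : ℕ → N}
    (h : ∀ n, L.SameType (fun i : Fin n => A i) (fun i : Fin n => B i)) (n : ℕ) (g : Fin n → ℕ) :
    L.SameType (A ∘ g) (B ∘ g) := by
  obtain ⟨k, hk⟩ := (Set.finite_range g).bddAbove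
  exact (h (k + 1)).comp fun i => ⟨g i, Nat.lt_succ_of_le (hk ⟨i, rfl⟩)⟩

noncomputable def ElementaryEmbedding.equivOfSurjective (f : M ↪ₑ[L] N) (hf : Surjective f) :
    M ≃[L] N :=
  ⟨Equiv.ofBijective f ⟨f.injective, hf⟩, f.map_fun, f.map_rel⟩

theorem nonempty_equiv_of_sameType_comp {ι : Type*} {A : ι → M} {B : ι → N} (hA : Surjective A)
    (hB : Surjective B) (h : ∀ n (g : Fin n → ι), L.SameType (A ∘ g) (B ∘ g)) :
    Nonempty (M ≃[L] N) := by
  have hAx {n : ℕ} (x : Fin n → M) : A ∘ (surjInv hA ∘ x) = x := by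
    rw [← comp_assoc, (rightInverse_surjInv hA).comp_eq_id, id_comp]
  let f : M ↪ₑ[L] N := ⟨B ∘ surjInv hA, fun n φ x => by
    have hx := h n (surjInv hA ∘ x) φ
    rw [hAx] at hx
    exact hx.symm⟩
  have hf : Surjective f := fun y => by
    obtain ⟨j, rfl⟩ := hB y
    exact ⟨A j, ((h 2 ![surjInv hA (A j), j]).eq_iff_eq 0 1).1 (surjInv_eq hA (A j))⟩
  exact ⟨f.equivOfSurjective hf⟩

end FirstOrder.Language

section Atomic

variable {L : FirstOrder.Language.{0, 0}} {T : L.Theory} {M N : Type} [L.Structure M]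
  [L.Structure N] [Nonempty M] [Nonempty N]

theorem Isolates.sameType {n : ℕ} {φ : L.Formula (Fin n)} (hφ : Isolates T φ) [M ⊨ T] [N ⊨ T]
    {a : Fin n → M} {b : Fin n → N} (ha : φ.Realize a) (hb : φ.Realize b) : L.SameType a b :=
  fun ψ => (hφ.2 ψ).elim
    (fun h => iff_of_true (h (.of T M) a ha) (h (.of T N) b hb))
    (fun h => iff_of_false (h (.of T M) a ha) (h (.of T N) b hb))

theorem IsAtomicModel.exists_sameType_snoc (hM : IsAtomicModel T M) [N ⊨ T] {n : ℕ}
    {a : Fin n → M} {b : Fin n → N} (h : L.SameType a b) (m : M) :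
    ∃ y, L.SameType (Fin.snoc a m) (Fin.snoc b y) := by
  have : M ⊨ T := hM.1
  obtain ⟨φ, hφ, hiso⟩ := hM.2 (n + 1) (Fin.snoc a m)
  obtain ⟨y, hy⟩ := Formula.realize_exLast.1 ((h φ.exLast).1 (Formula.realize_exLast.2 ⟨m, hφ⟩))
  exact ⟨y, hiso.sameType hφ hy⟩

end Atomic

theorem statement1_general {L : FirstOrder.Language.{0,0}} (T : L.Theory)
    (hT : T.IsComplete) (M N : Type) [L.Structure M] [L.Structure N]
    [Countable M] [Countable N] [Nonempty M] [Nonempty N]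
    (hM : IsAtomicModel T M) (hN : IsAtomicModel T N) :
    Nonempty (M ≃[L] N) := by
  have : M ⊨ T := hM.1
  have : N ⊨ T := hN.1
  obtain ⟨A, B, hA, hB, hAB⟩ := exists_surjective_of_backAndForth (R := fun _ a b => L.SameType a b)
    (sameType_of_isEmpty hT _ _) (fun _ _ _ h m => hM.exists_sameType_snoc h m)
    (fun _ _ _ h y => (hN.exists_sameType_snoc h.symm y).imp fun _ => SameType.symm)
  exact nonempty_equiv_of_sameType_comp hA hB (sameType_comp_of_forall_sameType_prefix hAB)

/-- any two countable atomic models of a complete countable first-order theory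
are isomorphic. -/
theorem statement1 {L : FirstOrder.Language.{0,0}} [Countable L.Symbols] (T : L.Theory)
    (hT : T.IsComplete) (M N : Type) [L.Structure M] [L.Structure N]
    [Countable M] [Countable N] [Nonempty M] [Nonempty N]
    (hM : IsAtomicModel T M) (hN : IsAtomicModel T N) :
    Nonempty (M ≃[L] N) :=
  statement1_general T hT M N hM hN
end

section
/- Let M be a structure and A ⊆ M an atomic subset (every finite tuple from A realizes a type isolated in Th(M)). Then the algebraic closure acl(A) in M is also atomic: every finite tuple from acl(A) realizes an isolated type in Th(M). -/
/-
Collect the finitely many parameters from `A` used by a tuple `b` from `acl(A)` into one tuple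
`a`; its type is isolated, say by `θ`. Adding an element `x` algebraic over an isolated tuple `c`
keeps the type isolated: if `φ(c, y)` has finitely many solutions, a single formula `σ` separates
`x` from those solutions whose type over `c` differs from that of `x`, and then
`θ(c) ∧ φ(c, y) ∧ σ(c, y)` isolates `tp(c, x)`. Adding the entries of `b` one at a time and then
forgetting `a` gives an isolating formula for `tp(b)`.
-/

open FirstOrder FirstOrder.Language

/-- `A` is an atomic subset of `M`: every finite tuple from `A` realizes a type isolated
in `Th(M)`. -/
def IsAtomicSet (L : FirstOrder.Language.{0,0}) (M : Type) [L.Structure M] (A : Set M) : Prop :=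
  ∀ (n : ℕ) (a : Fin n → M), (∀ i, a i ∈ A) →
    ∃ φ : L.Formula (Fin n), φ.Realize a ∧ Isolates (L.completeTheory M) φ

/-- `b` is in the algebraic closure of `A` in `M`: `b` satisfies a formula with parameters
from `A` having only finitely many solutions in `M`. -/
def InAcl (L : FirstOrder.Language.{0,0}) (M : Type) [L.Structure M] (A : Set M) (b : M) : Prop :=
  ∃ (n : ℕ) (φ : L.Formula (Fin (n + 1))) (a : Fin n → M),
    (∀ i, a i ∈ A) ∧ φ.Realize (Fin.snoc a b) ∧
      {x : M | φ.Realize (Fin.snoc a x)}.Finite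

namespace FirstOrder.Language

variable {L : FirstOrder.Language.{0, 0}}

noncomputable def Formula.allLast {k : ℕ} (χ : L.Formula (Fin (k + 1))) : L.Formula (Fin k) :=
  (χ.relabel finSumFinEquiv.symm).iAlls (Fin 1)

@[simp]
theorem Formula.realize_allLast {N : Type} [L.Structure N] {k : ℕ} {χ : L.Formula (Fin (k + 1))}
    {v : Fin k → N} : χ.allLast.Realize v ↔ ∀ y, χ.Realize (Fin.snoc v y) := by
  have happend (w : Fin 1 → N) : Sum.elim v w ∘ finSumFinEquiv.symm = Fin.snoc v (w 0) := by
    rw [← Fin.append_right_eq_snoc]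
    ext i
    refine Fin.addCases (fun i => ?_) (fun i => ?_) i <;> simp
  simp only [allLast, Formula.realize_iAlls, Formula.realize_relabel, happend]
  exact ⟨fun h y => h fun _ => y, fun h w => h (w 0)⟩

theorem exists_formula_separating {α M : Type} [L.Structure M] (v : α → M) {S : Set (α → M)}
    (hS : S.Finite) :
    ∃ σ : L.Formula α, σ.Realize v ∧
      ∀ w ∈ S, σ.Realize w → ∀ ψ : L.Formula α, ψ.Realize v → ψ.Realize w := by
  have hsep : ∀ w : α → M, ∃ σ : L.Formula α, σ.Realize v ∧
      (σ.Realize w → ∀ ψ : L.Formula α, ψ.Realize v → ψ.Realize w) := by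
    intro w
    by_cases h : ∃ ψ : L.Formula α, ψ.Realize v ∧ ¬ψ.Realize w
    · obtain ⟨ψ, hψv, hψw⟩ := h
      exact ⟨ψ, hψv, fun h => absurd h hψw⟩
    · simp only [not_exists, not_and, not_not] at h
      exact ⟨⊤, Formula.realize_top.2 trivial, fun _ => h⟩
  choose σ hσv hσw using hsep
  have := hS.to_subtype
  exact ⟨Formula.iInf fun w : S => σ w, Formula.realize_iInf.2 fun w => hσv w,
    fun w hw hσ => hσw w (Formula.realize_iInf.1 hσ ⟨w, hw⟩)⟩

end FirstOrder.Language

variable {L : FirstOrder.Language.{0, 0}}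

def TpIsolated (T : L.Theory) {M : Type} [L.Structure M] {n : ℕ} (c : Fin n → M) : Prop :=
  ∃ φ : L.Formula (Fin n), φ.Realize c ∧ Isolates T φ

def IsAlgOver (L : FirstOrder.Language.{0, 0}) {M : Type} [L.Structure M] {n : ℕ}
    (c : Fin n → M) (x : M) : Prop :=
  ∃ φ : L.Formula (Fin (n + 1)),
    φ.Realize (Fin.snoc c x) ∧ {y | φ.Realize (Fin.snoc c y)}.Finite

theorem inAcl_iff {M : Type} [L.Structure M] {A : Set M} {b : M} :
    InAcl L M A b ↔ ∃ (n : ℕ) (a : Fin n → M), (∀ i, a i ∈ A) ∧ IsAlgOver L a b :=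
  ⟨fun ⟨n, φ, a, haA, hb⟩ => ⟨n, a, haA, φ, hb⟩,
    fun ⟨n, a, haA, φ, hb⟩ => ⟨n, φ, a, haA, hb⟩⟩

theorem IsAlgOver.mono {M : Type} [L.Structure M] {k n : ℕ} {c : Fin k → M} {d : Fin n → M}
    {x : M} (hx : IsAlgOver L c x) (hcd : Set.range c ⊆ Set.range d) : IsAlgOver L d x := by
  obtain ⟨g, rfl⟩ := Set.range_subset_range_iff_exists_comp.1 hcd
  obtain ⟨φ, hφx, hfin⟩ := hx
  have hrel (y : M) :
      (φ.relabel (Fin.snoc (Fin.castSucc ∘ g) (Fin.last n))).Realize (Fin.snoc d y) ↔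
        φ.Realize (Fin.snoc (d ∘ g) y) := by
    rw [Formula.realize_relabel, Fin.comp_snoc, ← Function.comp_assoc, Fin.snoc_comp_castSucc,
      Fin.snoc_last]
  exact ⟨_, (hrel x).2 hφx, by simpa only [hrel] using hfin⟩

variable {T : L.Theory} {M : Type} [L.Structure M] [M ⊨ T] [Nonempty M]

theorem isolates_iff_of_realize {n : ℕ} {φ : L.Formula (Fin n)} {a : Fin n → M}
    (hφa : φ.Realize a) :
    Isolates T φ ↔ ∀ ψ : L.Formula (Fin n), ψ.Realize a →
      ∀ (N : Theory.ModelType.{0, 0, 0} T) (v : Fin n → N), φ.Realize v → ψ.Realize v := by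
  refine ⟨fun hφ ψ hψa => (hφ.2 ψ).resolve_right fun h => h (.of T M) a hφa hψa,
    fun h => ⟨⟨.of T M, a, hφa⟩, fun ψ => ?_⟩⟩
  by_cases hψa : ψ.Realize a
  · exact .inl (h ψ hψa)
  · exact .inr fun N v hv => Formula.realize_not.1 (h ψ.not (Formula.realize_not.2 hψa) N v hv)

theorem TpIsolated.comp {k n : ℕ} {c : Fin k → M} (hc : TpIsolated T c) (g : Fin n → Fin k) :
    TpIsolated T (c ∘ g) := by
  obtain ⟨Φ, hΦc, hΦ⟩ := hc
  let Ψ : L.Formula (Fin n) := Formula.iExs (Fin k) (Φ.relabel Sum.inr ⊓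
    Formula.iInf fun i => Term.equal (var (Sum.inl i)) (var (Sum.inr (g i))))
  have hΨ {N : Type} [L.Structure N] (v : Fin n → N) :
      Ψ.Realize v ↔ ∃ w, Φ.Realize w ∧ v = w ∘ g := by
    simp [Ψ, funext_iff]
  have hΨc : Ψ.Realize (c ∘ g) := (hΨ _).2 ⟨c, hΦc, rfl⟩
  refine ⟨Ψ, hΨc, (isolates_iff_of_realize hΨc).2 fun ψ hψ N v hv => ?_⟩
  obtain ⟨w, hΦw, rfl⟩ := (hΨ v).1 hv
  have hψg : (ψ.relabel g).Realize c := Formula.realize_relabel.2 hψ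
  exact Formula.realize_relabel.1 ((isolates_iff_of_realize hΦc).1 hΦ _ hψg N w hΦw)

theorem TpIsolated.snoc {k : ℕ} {c : Fin k → M} {x : M} (hc : TpIsolated T c)
    (hx : IsAlgOver L c x) : TpIsolated T (Fin.snoc c x) := by
  obtain ⟨θ, hθc, hθ⟩ := hc
  obtain ⟨φ, hφx, hfin⟩ := hx
  obtain ⟨σ, hσx, hσ⟩ :=
    exists_formula_separating (L := L) (Fin.snoc c x) (hfin.image (Fin.snoc c))
  have hΦx : (θ.relabel Fin.castSucc ⊓ (φ ⊓ σ)).Realize (Fin.snoc c x) := by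
    simp only [Formula.realize_inf, Formula.realize_relabel, Fin.snoc_comp_castSucc]
    exact ⟨hθc, hφx, hσx⟩
  refine ⟨_, hΦx, (isolates_iff_of_realize hΦx).2 fun ψ hψ N v hv => ?_⟩
  -- every solution of `φ ∧ σ` over `c` has the type of `x`, so `∀ y, φ ∧ σ → ψ` holds of `c`
  -- and hence of every realization of `θ`
  have hδc : ((φ ⊓ σ).imp ψ).allLast.Realize c := by
    simp only [Formula.realize_allLast, Formula.realize_imp, Formula.realize_inf]
    exact fun y hy => hσ _ ⟨y, hy.1, rfl⟩ hy.2 ψ hψ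
  simp only [Formula.realize_inf, Formula.realize_relabel] at hv
  have hδv := Formula.realize_allLast.1
    ((isolates_iff_of_realize hθc).1 hθ _ hδc N (Fin.init v) hv.1) (v (Fin.last k))
  rw [Fin.snoc_init_self] at hδv
  exact Formula.realize_imp.1 hδv (Formula.realize_inf.2 hv.2)

theorem TpIsolated.append {k n : ℕ} {c : Fin k → M} {b : Fin n → M} (hc : TpIsolated T c)
    (hb : ∀ i, IsAlgOver L c (b i)) : TpIsolated T (Fin.append c b) := by
  induction n with
  | zero => simpa only [Subsingleton.elim b Fin.elim0, Fin.append_elim0] using hc.comp _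
  | succ n ih =>
    rw [← Fin.snoc_init_self b, Fin.append_snoc]
    refine (ih fun i => hb _).snoc ((hb (Fin.last n)).mono ?_)
    rintro _ ⟨i, rfl⟩
    exact ⟨Fin.castAdd n i, Fin.append_left _ _ i⟩

/-- the algebraic closure of an atomic set is atomic. -/
theorem statement3 {L : FirstOrder.Language.{0,0}} (M : Type) [L.Structure M] [Nonempty M]
    (A : Set M) (hA : IsAtomicSet L M A) :
    IsAtomicSet L M {b | InAcl L M A b} := by
  intro n b hb
  choose m a' ha'A hb using fun i => inAcl_iff.1 (hb i)
  obtain ⟨k, a, -, ha⟩ := (Set.finite_iUnion fun i => Set.finite_range (a' i)).fin_param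
  have haA (r : Fin k) : a r ∈ A := by
    obtain ⟨i, p, hp⟩ := Set.mem_iUnion.1 (ha ▸ Set.mem_range_self r)
    exact hp ▸ ha'A i p
  have hbalg (i : Fin n) : IsAlgOver L a (b i) :=
    (hb i).mono (ha ▸ Set.subset_iUnion (fun i => Set.range (a' i)) i)
  have hab : TpIsolated (L.completeTheory M) (Fin.append a b) :=
    TpIsolated.append (hA k a haA) hbalg
  have hbproj : Fin.append a b ∘ Fin.natAdd k = b := funext (Fin.append_right a b)
  exact hbproj ▸ hab.comp (Fin.natAdd k)
end

section
/- If a complete countable first-order theory T is atomic (isolated types are dense) and M is a countable atomic model of T, then M is homogeneous: whenever ā and b̄ are finite tuples from M with tp(ā) = tp(b̄), there is an automorphism of M taking ā to b̄. -/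
open FirstOrder FirstOrder.Language

noncomputable def exLast {L : FirstOrder.Language.{0,0}} {k : ℕ} (φ : L.Formula (Fin (k+1))) :
    L.Formula (Fin k) :=
  (BoundedFormula.relabel (Fin.lastCases (Sum.inr (0 : Fin 1)) Sum.inl) φ).ex

lemma realize_exLast {L : FirstOrder.Language.{0,0}} {M : Type} [L.Structure M] {k : ℕ}
    (φ : L.Formula (Fin (k+1))) (v : Fin k → M) :
    (exLast φ).Realize v ↔ ∃ x : M, φ.Realize (Fin.snoc v x) := by
  rw [exLast, Formula.Realize, BoundedFormula.realize_ex]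
  refine exists_congr fun x => ?_
  rw [BoundedFormula.realize_relabel]
  rw [show (Fin.snoc (default : Fin 0 → M) x ∘ Fin.natAdd 1 : Fin 0 → M) = default from
    Subsingleton.elim _ _]
  rw [Formula.Realize]
  congr! 1
  funext i
  refine Fin.lastCases ?_ ?_ i <;> simp [Fin.snoc]

lemma extend_right {L : FirstOrder.Language.{0,0}} (T : L.Theory) (M : Type) [L.Structure M]
    [Nonempty M] (hmod : M ⊨ T)
    (hatomic : ∀ (m : ℕ) (a : Fin m → M), ∃ φ : L.Formula (Fin m), φ.Realize a ∧ Isolates T φ)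
    {k : ℕ} (a b : Fin k → M)
    (hab : ∀ φ : L.Formula (Fin k), φ.Realize a ↔ φ.Realize b) (c : M) :
    ∃ d : M, ∀ φ : L.Formula (Fin (k+1)),
      φ.Realize (Fin.snoc a c) ↔ φ.Realize (Fin.snoc b d) := by
  obtain ⟨θ, hθreal, hθiso⟩ := hatomic (k+1) (Fin.snoc a c)
  haveI : T.Model M := hmod
  let MT : Theory.ModelType T := Theory.ModelType.of T M
  have hex : (exLast θ).Realize a := (realize_exLast θ a).2 ⟨c, hθreal⟩
  have hexb : (exLast θ).Realize b := (hab _).1 hex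
  obtain ⟨d, hd⟩ := (realize_exLast θ b).1 hexb
  refine ⟨d, fun ψ => ?_⟩
  rcases hθiso.2 ψ with h | h
  · exact ⟨fun _ => h MT _ hd, fun _ => h MT _ hθreal⟩
  · exact ⟨fun hh => absurd hh (h MT _ hθreal), fun hh => absurd hh (h MT _ hd)⟩

theorem statement4_aux {L : FirstOrder.Language.{0,0}} [Countable L.Symbols] (T : L.Theory)
    (M : Type) [L.Structure M] [Countable M] [Nonempty M]
    (hM : IsAtomicModel T M) (n : ℕ) (a b : Fin n → M)
    (hab : ∀ φ : L.Formula (Fin n), φ.Realize a ↔ φ.Realize b) :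
    ∃ f : M ≃[L] M, ∀ i, f (a i) = b i := by
  obtain ⟨hmod, hatomic⟩ := hM
  obtain ⟨e, he⟩ := exists_surjective_nat M
  -- the type of stage-`j` data
  let S : ℕ → Type := fun j => {p : (Fin (n+j) → M) × (Fin (n+j) → M) //
    ∀ φ : L.Formula (Fin (n+j)), φ.Realize p.1 ↔ φ.Realize p.2}
  have step : ∀ j (x : S j), ∃ y : S (j+1),
      (∃ c, y.1.1 = Fin.snoc x.1.1 c) ∧ (∃ d, y.1.2 = Fin.snoc x.1.2 d) ∧
      (Even j → y.1.1 (Fin.last (n+j)) = e (j/2)) ∧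
      (¬ Even j → y.1.2 (Fin.last (n+j)) = e (j/2)) := by
    intro j x
    by_cases hj : Even j
    · obtain ⟨d, hd⟩ := extend_right T M hmod hatomic x.1.1 x.1.2 x.2 (e (j/2))
      exact ⟨⟨(Fin.snoc x.1.1 (e (j/2)), Fin.snoc x.1.2 d), hd⟩,
        ⟨_, rfl⟩, ⟨d, rfl⟩, fun _ => by simp, fun h => absurd hj h⟩
    · obtain ⟨c, hc⟩ := extend_right T M hmod hatomic x.1.2 x.1.1
        (fun φ => (x.2 φ).symm) (e (j/2))
      exact ⟨⟨(Fin.snoc x.1.1 c, Fin.snoc x.1.2 (e (j/2))), fun φ => (hc φ).symm⟩,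
        ⟨c, rfl⟩, ⟨_, rfl⟩, fun h => absurd h hj, fun _ => by simp⟩
  choose g hgc hgd hgeven hgodd using step
  let F : ∀ j, S j := fun j => Nat.rec ⟨(a, b), hab⟩ g j
  have hFsucc : ∀ j, F (j+1) = g j (F j) := fun j => rfl
  -- monotonicity
  have mono : ∀ j j' (h : j ≤ j') (i : Fin (n+j)),
      (F j').1.1 (Fin.castLE (by omega) i) = (F j).1.1 i ∧
      (F j').1.2 (Fin.castLE (by omega) i) = (F j).1.2 i := by
    intro j j' h i
    induction j' , h using Nat.le_induction with
    | base => exact ⟨rfl, rfl⟩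
    | succ j' h ih =>
      obtain ⟨c, hc⟩ := hgc j' (F j')
      obtain ⟨d, hd⟩ := hgd j' (F j')
      have hcast : (Fin.castLE (by omega) i : Fin (n+(j'+1))) =
          Fin.castSucc (Fin.castLE (by omega : n+j ≤ n+j') i) := by
        apply Fin.ext; simp
      constructor
      · rw [hFsucc j', hc, hcast, Fin.snoc_castSucc]; exact ih.1
      · rw [hFsucc j', hd, hcast, Fin.snoc_castSucc]; exact ih.2
  -- coherence
  have fkey_le : ∀ j j', j ≤ j' → ∀ (i : Fin (n+j)) (i' : Fin (n+j')),
      (F j).1.1 i = (F j').1.1 i' → (F j).1.2 i = (F j').1.2 i' := by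
    intro j j' h i i' heq
    have h1 := (mono j j' h i).1
    have h2 := (mono j j' h i).2
    have hsame : (F j').1.1 (Fin.castLE (by omega) i) = (F j').1.1 i' := by rw [h1, heq]
    have := ((F j').2 (Term.equal (Term.var (Fin.castLE (by omega) i)) (Term.var i'))).1
      (by simp [Term.realize, hsame])
    simp only [Formula.realize_equal, Term.realize_var] at this
    rw [← h2, this]
  have fkey : ∀ j (i : Fin (n+j)) j' (i' : Fin (n+j')),
      (F j).1.1 i = (F j').1.1 i' → (F j).1.2 i = (F j').1.2 i' := by
    intro j i j' i' heq
    rcases le_total j j' with h | h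
    · exact fkey_le j j' h i i' heq
    · exact (fkey_le j' j h i' i heq.symm).symm
  -- coverage
  have covA : ∀ m : M, ∃ j, ∃ i : Fin (n+j), (F j).1.1 i = m := by
    intro m
    obtain ⟨i0, rfl⟩ := he m
    have := hgeven (2*i0) (F (2*i0)) (even_two_mul i0)
    rw [← hFsucc, show 2*i0/2 = i0 from by omega] at this
    exact ⟨2*i0+1, Fin.last _, this⟩
  have covB : ∀ m : M, ∃ j, ∃ i : Fin (n+j), (F j).1.2 i = m := by
    intro m
    obtain ⟨i0, rfl⟩ := he m
    have hodd : ¬ Even (2*i0+1) := by simp [Nat.even_add_one, even_two_mul i0]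
    have := hgodd (2*i0+1) (F (2*i0+1)) hodd
    rw [← hFsucc, show (2*i0+1)/2 = i0 from by omega] at this
    exact ⟨2*i0+1+1, Fin.last _, this⟩
  choose J I hJI using covA
  set f : M → M := fun m => (F (J m)).1.2 (I m) with hfdef
  have hf : ∀ j (i : Fin (n+j)), f ((F j).1.1 i) = (F j).1.2 i := by
    intro j i
    exact fkey (J ((F j).1.1 i)) (I ((F j).1.1 i)) j i (hJI ((F j).1.1 i))
  -- preservation of all formulas
  have pres : ∀ (m : ℕ) (φ : L.Formula (Fin m)) (v : Fin m → M),
      φ.Realize v ↔ φ.Realize (f ∘ v) := by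
    intro m φ v
    set js := Finset.univ.sup (fun t : Fin m => J (v t)) with hjs
    have hw : ∀ t, ∃ w : Fin (n + js), (F js).1.1 w = v t ∧ (F js).1.2 w = f (v t) := by
      intro t
      have hle : J (v t) ≤ js := Finset.le_sup (f := fun t => J (v t)) (Finset.mem_univ t)
      refine ⟨Fin.castLE (by omega) (I (v t)), ?_, ?_⟩
      · rw [(mono _ _ hle _).1, hJI]
      · rw [(mono _ _ hle _).2]
    choose w hw1 hw2 using hw
    have h1 : v = (F js).1.1 ∘ w := funext fun t => (hw1 t).symm
    have h2 : f ∘ v = (F js).1.2 ∘ w := funext fun t => (hw2 t).symm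
    rw [h2, h1, ← Formula.realize_relabel, ← Formula.realize_relabel]
    exact (F js).2 _
  -- injectivity
  have finj : Function.Injective f := by
    intro x y h
    have := (pres 2 (Term.equal (Term.var 0) (Term.var 1)) ![x, y]).2
      (by simp [Term.realize, h])
    simpa [Term.realize] using this
  have fsurj : Function.Surjective f := by
    intro m
    obtain ⟨j, i, hi⟩ := covB m
    exact ⟨(F j).1.1 i, by rw [hf]; exact hi⟩
  let E : M ≃ M := Equiv.ofBijective f ⟨finj, fsurj⟩
  refine ⟨{ toEquiv := E,
            map_fun' := ?_,
            map_rel' := ?_ }, ?_⟩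
  · intro m F' x
    have := (pres (m+1)
      (Term.equal (Term.func F' (fun i => Term.var i.castSucc)) (Term.var (Fin.last m)))
      (Fin.snoc x (Structure.funMap F' x))).1 (by simp [Term.realize])
    simp only [Formula.realize_equal, Term.realize_func, Term.realize_var,
      Function.comp_apply, Fin.snoc_castSucc, Fin.snoc_last] at this
    exact this.symm
  · intro m r x
    have := pres m (r.formula (fun i => Term.var i)) x
    simp only [Formula.realize_rel, Term.realize_var, Function.comp_apply] at this
    exact (this.symm : _)
  · intro i
    exact hf 0 i

/-- a countable atomic model of a complete countable atomic theory is
homogeneous: any two finite tuples with the same complete type are conjugate by an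
automorphism. -/
theorem statement4 {L : FirstOrder.Language.{0,0}} [Countable L.Symbols] (T : L.Theory)
    (hT : T.IsComplete) (hdense : IsolatedTypesDense T)
    (M : Type) [L.Structure M] [Countable M] [Nonempty M]
    (hM : IsAtomicModel T M) (n : ℕ) (a b : Fin n → M)
    (hab : ∀ φ : L.Formula (Fin n), φ.Realize a ↔ φ.Realize b) :
    ∃ f : M ≃[L] M, ∀ i, f (a i) = b i :=
  statement4_aux T M hM n a b hab
end

section
/- Let M be a countable L-structure, β < ω₁ as in the Scott analysis, and suppose ā, b̄ are finite tuples in M of the same length such that M ⊨ φ_{β,c̄}(ā) and M ⊨ φ_{β,c̄}(b̄) for some tuple c̄ from M. Then there is an automorphism of M taking ā to b̄. -/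
/-!
Since `β` is a Scott ordinal, `ScottEq β` is a back-and-forth system on the tuples of `M`:
related tuples have the same atomic type, and `ā ≡_β b̄` upgrades to `ā ≡_{β+1} b̄`, so every
one-point extension on either side is matched on the other side again at level `β`. Being
symmetric and transitive, it relates `ā` to `b̄` through `c̄`. Alternating forth and back steps
along enumerations of the countable `M` then yields an increasing chain of related tuples whose
union is the graph of an automorphism extending `ā ↦ b̄`.
-/

open FirstOrder FirstOrder.Language

/-- The canonical Scott-analysis (back-and-forth) relation between tuples of two structures:
`ScottEq L M N α n a b` says that `b` satisfies the level-`α` Scott formula `φ_{α,a}` of the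
tuple `a`, i.e. `a` and `b` satisfy the same atomic formulas and, for every `β < α`, the
one-point extensions of `a` and of `b` match up at level `β`. -/
def ScottEq (L : FirstOrder.Language.{0,0}) (M N : Type) [L.Structure M] [L.Structure N] :
    Ordinal → (n : ℕ) → (Fin n → M) → (Fin n → N) → Prop
  | α, n, a, b =>
    (∀ φ : L.Formula (Fin n), φ.IsAtomic → (φ.Realize a ↔ φ.Realize b)) ∧
    ∀ β : Ordinal, β < α →
      (∀ c : M, ∃ d : N, ScottEq L M N β (n + 1) (Fin.snoc a c) (Fin.snoc b d)) ∧
      (∀ d : N, ∃ c : M, ScottEq L M N β (n + 1) (Fin.snoc a c) (Fin.snoc b d))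
  termination_by α => α

/-- `β` is a Scott ordinal for `M`: the Scott analysis of `M` stabilizes at level `β`. -/
def IsScottOrdinal (L : FirstOrder.Language.{0,0}) (M : Type) [L.Structure M]
    (β : Ordinal) : Prop :=
  ∀ (n : ℕ) (c a : Fin n → M), ScottEq L M M β n c a → ScottEq L M M (β + 1) n c a

universe u v w w'

namespace FirstOrder.Language

variable {L : FirstOrder.Language.{u, v}} {M : Type w} {N : Type w'}
  [L.Structure M] [L.Structure N]

variable (L) in
def SameAtomicType {n : ℕ} (a : Fin n → M) (b : Fin n → N) : Prop :=
  ∀ φ : L.Formula (Fin n), φ.IsAtomic → (φ.Realize a ↔ φ.Realize b)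

namespace SameAtomicType

variable {n : ℕ} {a : Fin n → M} {b : Fin n → N}

theorem comp (h : SameAtomicType L a b) {r : ℕ} (u : Fin r → Fin n) :
    SameAtomicType L (a ∘ u) (b ∘ u) := fun φ hφ => by
  simpa only [Formula.realize_relabel] using h (φ.relabel u) (hφ.relabel _)

theorem eq_iff (h : SameAtomicType L a b) (i j : Fin n) : a i = a j ↔ b i = b j := by
  simpa using h ((Term.var i).equal (Term.var j)) (.equal _ _)

end SameAtomicType

def Equiv.ofSameAtomicType (F : M ≃ N) (hF : ∀ r (v : Fin r → M), SameAtomicType L v (F ∘ v)) :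
    M ≃[L] N where
  toEquiv := F
  map_fun' {r} g v := by
    have := hF (r + 1) (Fin.snoc v (Structure.funMap g v))
      ((Term.func g fun i => Term.var i.castSucc).equal (Term.var (Fin.last r))) (.equal _ _)
    exact (by simpa [Function.comp_def] using this : _ = _).symm
  map_rel' {r} R v := by
    simpa [Function.comp_def] using (hF r v (R.formula Term.var) (.rel _ _)).symm

theorem exists_equiv_of_sameAtomicType (G : Set (M × N)) (hdom : ∀ m, ∃ n, (m, n) ∈ G)
    (hcod : ∀ n, ∃ m, (m, n) ∈ G)
    (hG : ∀ r (v : Fin r → M) (w : Fin r → N), (∀ i, (v i, w i) ∈ G) → SameAtomicType L v w) :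
    ∃ f : M ≃[L] N, ∀ m n, (m, n) ∈ G → f m = n := by
  choose F hF using hdom
  have hFG : ∀ m n, (m, n) ∈ G → F m = n := fun m n h =>
    ((hG 2 ![m, m] ![F m, n] (Fin.forall_fin_two.2 ⟨hF m, h⟩)).eq_iff 0 1).1 rfl
  have inj : F.Injective := fun m m' h =>
    ((hG 2 ![m, m'] ![F m, F m'] (Fin.forall_fin_two.2 ⟨hF m, hF m'⟩)).eq_iff 0 1).2 h
  have surj : F.Surjective := fun n => (hcod n).imp fun m => hFG m n
  exact ⟨.ofSameAtomicType (.ofBijective F ⟨inj, surj⟩) fun r v => hG r v _ fun i => hF (v i), hFG⟩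

variable (L) in
structure IsBackAndForthSystem (P : ∀ n, (Fin n → M) → (Fin n → N) → Prop) : Prop where
  sameAtomicType {n : ℕ} {a : Fin n → M} {b : Fin n → N} : P n a b → SameAtomicType L a b
  forth {n : ℕ} {a : Fin n → M} {b : Fin n → N} :
    P n a b → ∀ c, ∃ d, P (n + 1) (Fin.snoc a c) (Fin.snoc b d)
  back {n : ℕ} {a : Fin n → M} {b : Fin n → N} :
    P n a b → ∀ d, ∃ c, P (n + 1) (Fin.snoc a c) (Fin.snoc b d)

structure RelatedTuples (P : ∀ n, (Fin n → M) → (Fin n → N) → Prop) where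
  {len : ℕ}
  fst : Fin len → M
  snd : Fin len → N
  rel : P len fst snd

namespace RelatedTuples

variable {P : ∀ n, (Fin n → M) → (Fin n → N) → Prop}

def pairs (t : RelatedTuples P) : Set (M × N) :=
  Set.range fun i => (t.fst i, t.snd i)

def snoc (t : RelatedTuples P) (c : M) (d : N)
    (h : P (t.len + 1) (Fin.snoc t.fst c) (Fin.snoc t.snd d)) : RelatedTuples P :=
  ⟨_, _, h⟩

theorem pairs_subset_snoc (t : RelatedTuples P) {c : M} {d : N} (h) :
    t.pairs ⊆ (t.snoc c d h).pairs := by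
  rintro _ ⟨i, rfl⟩
  exact ⟨i.castSucc, by simp [snoc]⟩

theorem mem_pairs_snoc (t : RelatedTuples P) {c : M} {d : N} (h) :
    (c, d) ∈ (t.snoc c d h).pairs :=
  ⟨Fin.last _, by simp [snoc]⟩

theorem sameAtomicType_of_forall_mem_pairs (hP : IsBackAndForthSystem L P) (t : RelatedTuples P)
    {r : ℕ} {v : Fin r → M} {w : Fin r → N}
    (h : ∀ i, (v i, w i) ∈ t.pairs) : SameAtomicType L v w := by
  choose u hu using h
  obtain ⟨rfl, rfl⟩ : t.fst ∘ u = v ∧ t.snd ∘ u = w :=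
    ⟨funext fun i => congrArg Prod.fst (hu i), funext fun i => congrArg Prod.snd (hu i)⟩
  exact (hP.sameAtomicType t.rel).comp u

variable (hP : IsBackAndForthSystem L P)

noncomputable def forth (t : RelatedTuples P) (c : M) : RelatedTuples P :=
  t.snoc c _ (hP.forth t.rel c).choose_spec

noncomputable def back (t : RelatedTuples P) (d : N) : RelatedTuples P :=
  t.snoc _ d (hP.back t.rel d).choose_spec

noncomputable def backAndForthSeq (t₀ : RelatedTuples P) (eM : ℕ → M) (eN : ℕ → N) :
    ℕ → RelatedTuples P
  | 0 => t₀
  | k + 1 => ((backAndForthSeq t₀ eM eN k).forth hP (eM k)).back hP (eN k)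

variable (t₀ : RelatedTuples P) (eM : ℕ → M) (eN : ℕ → N)

theorem pairs_forth_subset_backAndForthSeq_succ (k : ℕ) :
    ((backAndForthSeq hP t₀ eM eN k).forth hP (eM k)).pairs ⊆
      (backAndForthSeq hP t₀ eM eN (k + 1)).pairs :=
  pairs_subset_snoc _ _

theorem monotone_pairs_backAndForthSeq :
    Monotone fun k => (backAndForthSeq hP t₀ eM eN k).pairs :=
  monotone_nat_of_le_succ fun k =>
    (pairs_subset_snoc _ _).trans (pairs_forth_subset_backAndForthSeq_succ hP t₀ eM eN k)

theorem exists_mem_pairs_backAndForthSeq_left (k : ℕ) :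
    ∃ d, (eM k, d) ∈ (backAndForthSeq hP t₀ eM eN (k + 1)).pairs :=
  ⟨_, pairs_forth_subset_backAndForthSeq_succ hP t₀ eM eN k (mem_pairs_snoc _ _)⟩

theorem exists_mem_pairs_backAndForthSeq_right (k : ℕ) :
    ∃ c, (c, eN k) ∈ (backAndForthSeq hP t₀ eM eN (k + 1)).pairs :=
  ⟨_, mem_pairs_snoc _ _⟩

end RelatedTuples

open RelatedTuples in
theorem IsBackAndForthSystem.exists_equiv [Countable M] [Countable N] [Nonempty M]
    {P : ∀ n, (Fin n → M) → (Fin n → N) → Prop} (hP : IsBackAndForthSystem L P) {n : ℕ}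
    {a : Fin n → M} {b : Fin n → N} (hab : P n a b) : ∃ f : M ≃[L] N, ∀ i, f (a i) = b i := by
  have : Nonempty N := ⟨(hP.forth hab (Classical.arbitrary M)).choose⟩
  obtain ⟨eM, heM⟩ := exists_surjective_nat M
  obtain ⟨eN, heN⟩ := exists_surjective_nat N
  let s := backAndForthSeq hP ⟨a, b, hab⟩ eM eN
  obtain ⟨f, hf⟩ := exists_equiv_of_sameAtomicType (⋃ k, (s k).pairs)
    (fun m => by
      obtain ⟨k, rfl⟩ := heM m
      exact (exists_mem_pairs_backAndForthSeq_left hP _ eM eN k).imp fun _ h =>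
        Set.mem_iUnion_of_mem _ h)
    (fun d => by
      obtain ⟨k, rfl⟩ := heN d
      exact (exists_mem_pairs_backAndForthSeq_right hP _ eM eN k).imp fun _ h =>
        Set.mem_iUnion_of_mem _ h)
    (fun r v w hvw => by
      choose k hk using fun i => Set.mem_iUnion.1 (hvw i)
      obtain ⟨K, hK⟩ := Finite.exists_le k
      exact (s K).sameAtomicType_of_forall_mem_pairs hP fun i =>
        monotone_pairs_backAndForthSeq hP _ eM eN (hK i) (hk i))
  exact ⟨f, fun i => hf _ _ (Set.mem_iUnion_of_mem 0 ⟨i, rfl⟩)⟩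

end FirstOrder.Language

section Scott

variable {L : FirstOrder.Language.{0,0}} {M N K : Type} [L.Structure M] [L.Structure N]
  [L.Structure K]

theorem ScottEq.symm {α : Ordinal} {n : ℕ} {a : Fin n → M} {b : Fin n → N}
    (h : ScottEq L M N α n a b) : ScottEq L N M α n b a := by
  induction α using WellFoundedLT.induction generalizing n with
  | ind α IH =>
    rw [ScottEq] at h ⊢
    refine ⟨fun φ hφ => (h.1 φ hφ).symm, fun γ hγ => ?_⟩
    obtain ⟨forth, back⟩ := h.2 γ hγ
    exact ⟨fun d => (back d).imp fun _ hc => IH γ hγ hc,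
      fun c => (forth c).imp fun _ hd => IH γ hγ hd⟩

theorem ScottEq.trans {α : Ordinal} {n : ℕ} {a : Fin n → M} {b : Fin n → N} {c : Fin n → K}
    (hab : ScottEq L M N α n a b) (hbc : ScottEq L N K α n b c) : ScottEq L M K α n a c := by
  induction α using WellFoundedLT.induction generalizing n with
  | ind α IH =>
    rw [ScottEq] at hab hbc ⊢
    refine ⟨fun φ hφ => (hab.1 φ hφ).trans (hbc.1 φ hφ), fun γ hγ => ⟨fun x => ?_, fun z => ?_⟩⟩
    · obtain ⟨y, hxy⟩ := (hab.2 γ hγ).1 x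
      obtain ⟨z, hyz⟩ := (hbc.2 γ hγ).1 y
      exact ⟨z, IH γ hγ hxy hyz⟩
    · obtain ⟨y, hyz⟩ := (hbc.2 γ hγ).2 z
      obtain ⟨x, hxy⟩ := (hab.2 γ hγ).2 y
      exact ⟨x, IH γ hγ hxy hyz⟩

theorem ScottEq.sameAtomicType {α : Ordinal} {n : ℕ} {a : Fin n → M} {b : Fin n → N}
    (h : ScottEq L M N α n a b) : SameAtomicType L a b := by
  rw [ScottEq] at h
  exact h.1

theorem ScottEq.forth_back {α γ : Ordinal} {n : ℕ} {a : Fin n → M} {b : Fin n → N}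
    (h : ScottEq L M N α n a b) (hγ : γ < α) :
    (∀ c, ∃ d, ScottEq L M N γ (n + 1) (Fin.snoc a c) (Fin.snoc b d)) ∧
      ∀ d, ∃ c, ScottEq L M N γ (n + 1) (Fin.snoc a c) (Fin.snoc b d) := by
  rw [ScottEq] at h
  exact h.2 γ hγ

theorem IsScottOrdinal.isBackAndForthSystem {β : Ordinal} (hS : IsScottOrdinal L M β) :
    IsBackAndForthSystem L (ScottEq L M M β) where
  sameAtomicType := ScottEq.sameAtomicType
  forth h := ((hS _ _ _ h).forth_back (Order.lt_add_one_iff.2 le_rfl)).1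
  back h := ((hS _ _ _ h).forth_back (Order.lt_add_one_iff.2 le_rfl)).2

end Scott

theorem statement6_general {L : FirstOrder.Language.{0,0}}
    (M : Type) [L.Structure M] [Countable M]
    (β : Ordinal) (hScott : IsScottOrdinal L M β)
    (n : ℕ) (c a b : Fin n → M)
    (ha : ScottEq L M M β n c a) (hb : ScottEq L M M β n c b) :
    ∃ f : M ≃[L] M, ∀ i, f (a i) = b i := by
  cases isEmpty_or_nonempty M with
  | inl _ => exact ⟨.refl L M, fun i => isEmptyElim (a i)⟩
  | inr _ => exact hScott.isBackAndForthSystem.exists_equiv (ha.symm.trans hb)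

/-- if `M` is a countable structure, `β < ω₁` a Scott ordinal for `M`, and
`ā`, `b̄` are tuples of `M` both satisfying the level-`β` Scott formula `φ_{β,c̄}` of some
tuple `c̄` from `M`, then some automorphism of `M` maps `ā` to `b̄`. -/
theorem statement6 {L : FirstOrder.Language.{0,0}} [Countable L.Symbols]
    (M : Type) [L.Structure M] [Countable M]
    (β : Ordinal) (hβ : β < (Cardinal.aleph 1).ord) (hScott : IsScottOrdinal L M β)
    (n : ℕ) (c a b : Fin n → M)
    (ha : ScottEq L M M β n c a) (hb : ScottEq L M M β n c b) :
    ∃ f : M ≃[L] M, ∀ i, f (a i) = b i :=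
  statement6_general M β hScott n c a b ha hb
end
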